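/- Let φ(x,y,u) = u(1−y) − x²/2, and let e₁ = (1−y)∂ₓ + x∂ᵤ and e₂ = (1−y)∂_y + u∂ᵤ. Then at every point p = (x,y,u) with y < 1 and φ(p) = 0, the vectors e₁(p) and e₂(p) are linearly independent and span the kernel of the differential dφ(p); i.e. the tangent fields e₁, e₂ span the full tangent plane of the graph {u = x²/(2(1−y))} at each of its points. Consequently the surface is affinely locally homogeneous. -/

import Mathlib

/-!
`dφ(p) = (1 - y) du - u dy - x dx` annihilates `e₁(p)` and `e₂(p)` identically in `p`. Where
`y ≠ 1`, the `(x, y)`-components `(1 - y, 0)` and `(0, 1 - y)` of `e₁(p)`, `e₂(p)` make them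
independent, and a vector `v ∈ ker dφ(p)` equals `(v.x / (1 - y)) • e₁(p) + (v.y / (1 - y)) • e₂(p)`.
-/

/-- `φ(x,y,u) = u(1−y) − x²/2`. -/
noncomputable def phiFlat : ℝ × ℝ × ℝ → ℝ := fun p => p.2.2 * (1 - p.2.1) - p.1 ^ 2 / 2

/-- `e₁ = (1−y)∂ₓ + x∂ᵤ`. -/
noncomputable def e1Flat : ℝ × ℝ × ℝ → ℝ × ℝ × ℝ := fun p => (1 - p.2.1, 0, p.1)

/-- `e₂ = (1−y)∂_y + u∂ᵤ`. -/
noncomputable def e2Flat : ℝ × ℝ × ℝ → ℝ × ℝ × ℝ := fun p => (0, 1 - p.2.1, p.2.2)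

open ContinuousLinearMap in
theorem hasFDerivAt_phiFlat (p : ℝ × ℝ × ℝ) :
    HasFDerivAt phiFlat
      ((1 - p.2.1) • (snd ℝ ℝ ℝ ∘L snd ℝ ℝ (ℝ × ℝ)) - p.2.2 • (fst ℝ ℝ ℝ ∘L snd ℝ ℝ (ℝ × ℝ))
        - p.1 • fst ℝ ℝ (ℝ × ℝ)) p := by
  have hx : HasFDerivAt (fun q : ℝ × ℝ × ℝ => q.1) _ p := hasFDerivAt_fst (𝕜 := ℝ)
  have hy := (hasFDerivAt_snd (𝕜 := ℝ) (p := p)).fst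
  have hu := (hasFDerivAt_snd (𝕜 := ℝ) (p := p)).snd
  refine ((hu.mul ((hasFDerivAt_const 1 p).sub hy)).sub ((hx.pow 2).mul_const 2⁻¹)).congr_fderiv ?_
  ext <;> simp

theorem fderiv_phiFlat_apply (p v : ℝ × ℝ × ℝ) :
    fderiv ℝ phiFlat p v = (1 - p.2.1) * v.2.2 - p.2.2 * v.2.1 - p.1 * v.1 := by
  simp [(hasFDerivAt_phiFlat p).fderiv]

theorem linearIndependent_e1Flat_e2Flat {p : ℝ × ℝ × ℝ} (hy : p.2.1 ≠ 1) :
    LinearIndependent ℝ ![e1Flat p, e2Flat p] := by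
  rw [LinearIndependent.pair_iff]
  intro s t hst
  have hc : 1 - p.2.1 ≠ 0 := sub_ne_zero.2 hy.symm
  simp only [e1Flat, e2Flat, Prod.smul_mk, smul_eq_mul, Prod.mk_add_mk, Prod.mk_eq_zero,
    mul_zero, zero_add, add_zero, mul_eq_zero, hc, or_false] at hst
  exact ⟨hst.1, hst.2.1⟩

theorem span_e1Flat_e2Flat_eq_ker {p : ℝ × ℝ × ℝ} (hy : p.2.1 ≠ 1) :
    Submodule.span ℝ {e1Flat p, e2Flat p} =
      LinearMap.ker (fderiv ℝ phiFlat p : ℝ × ℝ × ℝ →ₗ[ℝ] ℝ) := by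
  have hc : 1 - p.2.1 ≠ 0 := sub_ne_zero.2 hy.symm
  ext ⟨a, b, c⟩
  rw [Submodule.mem_span_pair, LinearMap.mem_ker, ContinuousLinearMap.coe_coe,
    fderiv_phiFlat_apply]
  simp only [e1Flat, e2Flat, Prod.smul_mk, smul_eq_mul, Prod.mk_add_mk, Prod.mk.injEq,
    mul_zero, zero_add, add_zero]
  constructor
  · rintro ⟨s, t, rfl, rfl, rfl⟩
    ring
  · intro h
    refine ⟨a / (1 - p.2.1), b / (1 - p.2.1), by field_simp, by field_simp, ?_⟩
    field_simp
    linarith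

/-- At every point `p` of the graph `{u = x²/(2(1−y)), y < 1}` (i.e. `φ(p) = 0`, `y < 1`),
the vectors `e₁(p)`, `e₂(p)` are linearly independent and span `ker dφ(p)`, the full
tangent plane of the graph at `p`. -/
theorem flat_model_tangent_span :
    ∀ p : ℝ × ℝ × ℝ, p.2.1 < 1 → phiFlat p = 0 →
      LinearIndependent ℝ ![e1Flat p, e2Flat p] ∧
      Submodule.span ℝ {e1Flat p, e2Flat p} = LinearMap.ker (fderiv ℝ phiFlat p : ℝ × ℝ × ℝ →ₗ[ℝ] ℝ) :=
  fun _ hy _ => ⟨linearIndependent_e1Flat_e2Flat hy.ne, span_e1Flat_e2Flat_eq_ker hy.ne⟩
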